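/- During Phase 2 of the local evacuation-shuffle with current value i, if the suffix of the reading word strictly after ⊠ contains strictly more i's than (i+1)'s, then there exists an entry equal to i occurring after ⊠ in reading order. Consequently every Phase 2 move of the algorithm is well-defined and the algorithm terminates. -/

import Mathlib

/-
Common combinatorial framework for the paper
"Monodromy and K-theory of Schubert curves via generalized jeu de taquin"
(Gillespie–Levinson).

Cells are pairs (row, column), 0-indexed, with row 0 the top row (English
convention).  A skew tableau is modelled as a `Filling`, i.e. a function
`Cell → Option ℕ`; `none` means the cell is not in the (filled part of the)
shape.  A punctured tableau is a filling together with a distinguished empty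
cell `box` (the ⊠).
-/

namespace SC

/-- A cell `(row, column)` of the plane; row `0` is the top row. -/
abbrev Cell : Type := ℕ × ℕ

/-- A partial filling of the cells by natural-number entries. -/
abbrev Filling : Type := Cell → Option ℕ

/-- `readBefore p q` : the cell `p` comes strictly before `q` in reading order
(rows bottom to top, left to right within each row). -/
def readBefore (p q : Cell) : Prop :=
  q.1 < p.1 ∨ (p.1 = q.1 ∧ p.2 < q.2)

/-- Two cells share an edge. -/
def Adj (p q : Cell) : Prop :=
  (p.1 = q.1 ∧ (p.2 + 1 = q.2 ∨ q.2 + 1 = p.2)) ∨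
    (p.2 = q.2 ∧ (p.1 + 1 = q.1 ∨ q.1 + 1 = p.1))

/-- A partition contained in the `k × m` rectangle (parts indexed from `0`). -/
structure Partition (k m : ℕ) where
  part : ℕ → ℕ
  antitone' : ∀ ⦃i j : ℕ⦄, i ≤ j → part j ≤ part i
  le_width : ∀ i, part i ≤ m
  eq_zero : ∀ i, k ≤ i → part i = 0

/-- The size `|λ|` of a partition. -/
def Partition.size {k m : ℕ} (l : Partition k m) : ℕ :=
  ∑ i ∈ Finset.range k, l.part i

/-- The number `ℓ(λ)` of nonzero parts. -/
def Partition.length {k m : ℕ} (l : Partition k m) : ℕ :=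
  ((Finset.range k).filter fun i => l.part i ≠ 0).card

/-- The skew shape `γᶜ/α` inside the `k × m` rectangle: row `i` of `γᶜ` has
length `m - γ (k-1-i)`. -/
def totalShape (k m : ℕ) (a g : Partition k m) : Set Cell :=
  {p | p.1 < k ∧ a.part p.1 ≤ p.2 ∧ p.2 < m - g.part (k - 1 - p.1)}

/-- The set of filled cells of a filling. -/
def shapeOf (T : Filling) : Set Cell := {p | T p ≠ none}

/-- Rows are weakly increasing (on filled cells). -/
def RowsWeak (T : Filling) : Prop :=
  ∀ r c₁ c₂ v₁ v₂, c₁ ≤ c₂ → T (r, c₁) = some v₁ → T (r, c₂) = some v₂ → v₁ ≤ v₂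

/-- Columns are strictly increasing (on filled cells). -/
def ColsStrict (T : Filling) : Prop :=
  ∀ r₁ r₂ c v₁ v₂, r₁ < r₂ → T (r₁, c) = some v₁ → T (r₂, c) = some v₂ → v₁ < v₂

/-- All entries are at least `1`. -/
def PosEntries (T : Filling) : Prop := ∀ p v, T p = some v → 1 ≤ v

open scoped Classical in
/-- The number of cells of the `k × m` rectangle satisfying `P` and carrying
the entry `v`. -/
noncomputable def countP (k m : ℕ) (T : Filling) (P : Cell → Prop) (v : ℕ) : ℕ :=
  ((Finset.range k ×ˢ Finset.range m).filter fun p => P p ∧ T p = some v).card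

/-- The reading word is ballot: every weak suffix contains, for each `i ≥ 1`,
at least as many `i`'s as `(i+1)`'s. -/
def Ballot (k m : ℕ) (T : Filling) : Prop :=
  ∀ (p : Cell) (i : ℕ), 1 ≤ i →
    countP k m T (fun q => q = p ∨ readBefore p q) (i + 1) ≤
      countP k m T (fun q => q = p ∨ readBefore p q) i

/-- The filling has content `β`: the entry `j+1` occurs exactly `β j` times. -/
def HasContent (k m : ℕ) (b : Partition k m) (T : Filling) : Prop :=
  ∀ j : ℕ, countP k m T (fun _ => True) (j + 1) = b.part j

/-- A punctured tableau: a filling together with a distinguished empty cell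
(the `⊠`). -/
structure PState where
  box : Cell
  T : Filling

/-- Membership in `LR(α, □, β, γ)`: `T` is a Littlewood–Richardson skew tableau
of content `β`, `⊠` is an inner co-corner of `T`, and `⊠ ⊔ T` has shape `γᶜ/α`.
(The conditions on `(box.1, box.2 - 1)` and `(box.1 - 1, box.2)` say that the
west and north neighbours of the box are not in the shape; note that if
`box.2 = 0` resp. `box.1 = 0` the displayed cell is the box itself, which is
empty, so the condition is automatic, as it should be.) -/
def MemLR1 (k m : ℕ) (a b g : Partition k m) (x : PState) : Prop :=
  x.box ∈ totalShape k m a g ∧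
  (∀ p : Cell, (x.T p).isSome ↔ (p ∈ totalShape k m a g ∧ p ≠ x.box)) ∧
  RowsWeak x.T ∧ ColsStrict x.T ∧ PosEntries x.T ∧
  Ballot k m x.T ∧ HasContent k m b x.T ∧
  (x.box.1, x.box.2 - 1) ∉ shapeOf x.T ∧ (x.box.1 - 1, x.box.2) ∉ shapeOf x.T

/-- Membership in `LR(α, β, □, γ)`: as in `MemLR1` but the box `⊠` extends `T`
outward (its east and south neighbours are not in the shape). -/
def MemLR2 (k m : ℕ) (a b g : Partition k m) (x : PState) : Prop :=
  x.box ∈ totalShape k m a g ∧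
  (∀ p : Cell, (x.T p).isSome ↔ (p ∈ totalShape k m a g ∧ p ≠ x.box)) ∧
  RowsWeak x.T ∧ ColsStrict x.T ∧ PosEntries x.T ∧
  Ballot k m x.T ∧ HasContent k m b x.T ∧
  (x.box.1, x.box.2 + 1) ∉ shapeOf x.T ∧ (x.box.1 + 1, x.box.2) ∉ shapeOf x.T

/-- Exchange the box with the cell `q`, which receives the box while the old
box cell receives the entry `v`. -/
def swapState (x : PState) (q : Cell) (v : ℕ) : PState :=
  ⟨q, Function.update (Function.update x.T q none) x.box (some v)⟩

/-! ### The local evacuation-shuffle -/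

/-- Phase 1 applies at value `i` iff the box does not precede all of the `i`'s
in reading order. -/
def phase1Cond (i : ℕ) (x : PState) : Prop :=
  ∃ q, x.T q = some i ∧ readBefore q x.box

/-- `q` is the nearest `i` strictly prior to the box in reading order. -/
def Phase1Move (i : ℕ) (x : PState) (q : Cell) : Prop :=
  x.T q = some i ∧ readBefore q x.box ∧
    ∀ q', x.T q' = some i → readBefore q' x.box → q' = q ∨ readBefore q' q

/-- Phase 2 continues at value `i` iff the suffix of the reading word strictly
after the box contains strictly more `i`'s than `(i+1)`'s. -/
def phase2Cond (k m i : ℕ) (x : PState) : Prop :=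
  countP k m x.T (fun q => readBefore x.box q) (i + 1) <
    countP k m x.T (fun q => readBefore x.box q) i

/-- `q` is the nearest `i` strictly after the box in reading order. -/
def Phase2Move (i : ℕ) (x : PState) (q : Cell) : Prop :=
  x.T q = some i ∧ readBefore x.box q ∧
    ∀ q', x.T q' = some i → readBefore x.box q' → q' = q ∨ readBefore q q'

/-- One step of the local evacuation-shuffle algorithm, on states
`(i, phase, x)` where `phase = false` is Phase 1 and `phase = true` is
Phase 2, and `lb = ℓ(β)`.  The algorithm starts at `(1, false, x)` and is
stuck exactly at the states with `i = lb + 1`. -/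
inductive Step (k m lb : ℕ) : ℕ × Bool × PState → ℕ × Bool × PState → Prop
  | p1 {i : ℕ} {x : PState} {q : Cell} (hi : i ≤ lb) (h : Phase1Move i x q) :
      Step k m lb (i, false, x) (i + 1, false, swapState x q i)
  | p1to2 {i : ℕ} {x : PState} (hi : i ≤ lb) (h : ¬ phase1Cond i x) :
      Step k m lb (i, false, x) (i, true, x)
  | p2 {i : ℕ} {x : PState} {q : Cell} (hi : i ≤ lb) (hc : phase2Cond k m i x)
      (h : Phase2Move i x q) :
      Step k m lb (i, true, x) (i, true, swapState x q i)
  | p2inc {i : ℕ} {x : PState} (hi : i ≤ lb) (hc : ¬ phase2Cond k m i x) :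
      Step k m lb (i, true, x) (i + 1, true, x)

/-- The complete run of the local evacuation-shuffle:
`local-esh (x) = y`. -/
def LocalEshRun (k m lb : ℕ) (x y : PState) : Prop :=
  ∃ bl : Bool, Relation.ReflTransGen (Step k m lb) (1, false, x) (lb + 1, bl, y)

/-! ### Jeu de taquin slides -/

/-- One step of an inward jeu de taquin slide: the empty box moves north or
west, the displaced entry moves south-east into the old box.  Ties between the
north and west entries are broken by moving the north entry. -/
inductive InStep : PState → PState → Prop
  | north {x : PState} {r c v : ℕ} (hb : x.box = (r + 1, c)) (hv : x.T (r, c) = some v)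
      (hw : ∀ w, x.T (r + 1, c - 1) = some w → w ≤ v) :
      InStep x (swapState x (r, c) v)
  | west {x : PState} {r c v : ℕ} (hb : x.box = (r, c + 1)) (hv : x.T (r, c) = some v)
      (hn : ∀ w, x.T (r - 1, c + 1) = some w → w < v) :
      InStep x (swapState x (r, c) v)

/-- One step of an outward jeu de taquin slide: the empty box moves south or
east, the displaced entry moves north-west into the old box.  Ties between the
south and east entries are broken by moving the south entry. -/
inductive OutStep : PState → PState → Prop
  | south {x : PState} {r c v : ℕ} (hb : x.box = (r, c)) (hv : x.T (r + 1, c) = some v)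
      (he : ∀ w, x.T (r, c + 1) = some w → v ≤ w) :
      OutStep x (swapState x (r + 1, c) v)
  | east {x : PState} {r c v : ℕ} (hb : x.box = (r, c)) (hv : x.T (r, c + 1) = some v)
      (hs : ∀ w, x.T (r + 1, c) = some w → v < w) :
      OutStep x (swapState x (r, c + 1) v)

/-- Run a step relation to completion. -/
def RunToEnd (R : PState → PState → Prop) (x y : PState) : Prop :=
  Relation.ReflTransGen R x y ∧ ∀ z, ¬ R y z

/-- The shuffle `sh : LR(α,β,□,γ) → LR(α,□,β,γ)`: the complete inward jeu de
taquin slide of `T` into the box. -/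
def ShRun (x y : PState) : Prop := RunToEnd InStep x y

/-! ### Rectification, promotion, and the evacuation-shuffle -/

/-- `S` is (the set of cells of) a skew shape `λ/μ`. -/
def IsSkewShape (S : Set Cell) : Prop :=
  ∃ lam mu : ℕ → ℕ,
    (∀ ⦃i j : ℕ⦄, i ≤ j → lam j ≤ lam i) ∧ (∀ ⦃i j : ℕ⦄, i ≤ j → mu j ≤ mu i) ∧
    (∀ i, mu i ≤ lam i) ∧ ∀ p : Cell, p ∈ S ↔ mu p.1 ≤ p.2 ∧ p.2 < lam p.1

/-- `c` is an inner co-corner of the shape `S` (an addable corner of the inner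
partition). -/
def InnerAddable (S : Set Cell) (c : Cell) : Prop :=
  c ∉ S ∧ IsSkewShape (insert c S) ∧ (c.1, c.2 - 1) ∉ S ∧ (c.1 - 1, c.2) ∉ S

/-- One rectification move on a filling `U`: slide the hole inward from an
inner co-corner `c` through `U` until it exits; `d` records the vacated outer
cell and `V` is the resulting filling. -/
def RectMove (U V : Filling) (d : Cell) : Prop :=
  ∃ c : Cell, InnerAddable (shapeOf U) c ∧ RunToEnd OutStep ⟨c, U⟩ ⟨d, V⟩

/-- A sequence of rectification moves, recording the vacated cells. -/
inductive RectSeq : Filling → List Cell → Filling → Prop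
  | nil (U : Filling) : RectSeq U [] U
  | cons {U V W : Filling} {d : Cell} {ds : List Cell} :
      RectMove U V d → RectSeq V ds W → RectSeq U (d :: ds) W

/-- One un-rectification move: slide the hole outward-to-inward starting at the
recorded cell `d` (this is the inverse of the rectification move that vacated
`d`). -/
def UnRectMove (V W : Filling) (d : Cell) : Prop :=
  d ∉ shapeOf V ∧ ∃ c : Cell, RunToEnd InStep ⟨d, V⟩ ⟨c, W⟩

/-- A sequence of un-rectification moves along a list of recorded cells. -/
inductive UnRectSeq : Filling → List Cell → Filling → Prop
  | nil (U : Filling) : UnRectSeq U [] U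
  | cons {U V W : Filling} {d : Cell} {ds : List Cell} :
      UnRectMove U V d → UnRectSeq V ds W → UnRectSeq U (d :: ds) W

/-- `S` is a straight (non-skew) shape. -/
def IsStraight (S : Set Cell) : Prop :=
  ∀ p ∈ S, ∀ q : Cell, q.1 ≤ p.1 → q.2 ≤ p.2 → q ∈ S

/-- Jeu de taquin promotion step on a rectified tableau containing the entry
`0`: delete the `0`, rectify the remainder (one outward slide of the hole),
and label the vacated outer corner with `lb + 1`. -/
def PromMove (lb : ℕ) (R R' : Filling) : Prop :=
  ∃ (p d : Cell) (V : Filling), R p = some 0 ∧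
    RunToEnd OutStep ⟨p, Function.update R p none⟩ ⟨d, V⟩ ∧
    R' = Function.update V d (some (lb + 1))

/-- The evacuation-shuffle `esh : LR(α,□,β,γ) → LR(α,β,□,γ)`: treat `⊠` as the
entry `0`, rectify recording the order, promote (delete the `0`, rectify the
remainder, label the vacated corner `ℓ(β)+1`), un-rectify along the recorded
order reversed, and turn the entry `ℓ(β)+1` back into `⊠`. -/
def EshRel (lb : ℕ) (x y : PState) : Prop :=
  ∃ (ds : List Cell) (R R' W : Filling),
    RectSeq (Function.update x.T x.box (some 0)) ds R ∧
    IsStraight (shapeOf R) ∧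
    PromMove lb R R' ∧
    UnRectSeq R' ds.reverse W ∧
    W y.box = some (lb + 1) ∧ y.T = Function.update W y.box none

/-- The monodromy operator `ω = sh ∘ local-esh` (as a relation). -/
def OmegaRel (k m lb : ℕ) (x y : PState) : Prop :=
  ∃ z : PState, LocalEshRun k m lb x z ∧ ShRun z y

/-! ### Genomic tableaux -/

/-- `(U, {b₁, b₂})` is a ballot genomic tableau of shape `γᶜ/α` and K-theoretic
content `β`, with repeated (extra) entry `i`; here `b₁` comes before `b₂` in
reading order. -/
def IsGenomic (k m : ℕ) (a b g : Partition k m) (i : ℕ)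
    (U : Filling) (b₁ b₂ : Cell) : Prop :=
  1 ≤ i ∧
  (∀ p : Cell, (U p).isSome ↔ p ∈ totalShape k m a g) ∧
  RowsWeak U ∧ ColsStrict U ∧ PosEntries U ∧
  (∀ j : ℕ, countP k m U (fun _ => True) (j + 1)
      = b.part j + if j + 1 = i then 1 else 0) ∧
  readBefore b₁ b₂ ∧ ¬ Adj b₁ b₂ ∧ U b₁ = some i ∧ U b₂ = some i ∧
  (∀ q : Cell, U q = some i → readBefore b₁ q → readBefore q b₂ → False) ∧
  Ballot k m (Function.update U b₁ none) ∧
  Ballot k m (Function.update U b₂ none)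

/-- `K(γᶜ/α; β)(i)`: ballot genomic tableaux with repeated entry `i`. -/
def KSet (k m : ℕ) (a b g : Partition k m) (i : ℕ) : Set (Filling × Cell × Cell) :=
  {u | IsGenomic k m a b g i u.1 u.2.1 u.2.2}

/-- `K(γᶜ/α; β)`: all ballot genomic tableaux of shape `γᶜ/α` and K-theoretic
content `β`. -/
def KAll (k m : ℕ) (a b g : Partition k m) : Set (Filling × Cell × Cell) :=
  ⋃ i : ℕ, KSet k m a b g i

/-! ### Permutation utilities -/

/-- The reflection length of a permutation: the least number of transpositions
whose product is `g`. -/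
noncomputable def rlength {X : Type*} (g : Equiv.Perm X) : ℕ :=
  letI := Classical.decEq X
  sInf {n : ℕ | ∃ l : List (Equiv.Perm X), l.length = n ∧
    (∀ τ ∈ l, ∃ x y : X, x ≠ y ∧ τ = Equiv.swap x y) ∧ l.prod = g}

/-- The set of orbits of a permutation. -/
def orbitsOf {X : Type*} (g : Equiv.Perm X) : Set (Set X) :=
  {s | ∃ a : X, s = {b | g.SameCycle a b}}

/-- The number of orbits of a permutation. -/
noncomputable def orbitCount {X : Type*} (g : Equiv.Perm X) : ℕ :=
  (orbitsOf g).ncard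

/-! ### The sets `Xᵢ` and the factors `ℓᵢ`, `sᵢ` -/

/-- The box sits between the `(i-1)`-st and `i`-th horizontal strips:
giving the box any value strictly between `i - 1` and `i` would keep rows
weakly increasing and columns strictly increasing. -/
def BoxBetween (i : ℕ) (x : PState) : Prop :=
  (∀ c v, c < x.box.2 → x.T (x.box.1, c) = some v → v ≤ i - 1) ∧
  (∀ c v, x.box.2 < c → x.T (x.box.1, c) = some v → i ≤ v) ∧
  (∀ r v, r < x.box.1 → x.T (r, x.box.2) = some v → v ≤ i - 1) ∧
  (∀ r v, x.box.1 < r → x.T (r, x.box.2) = some v → i ≤ v)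

/-- The set `Xᵢ` of punctured tableaux of content `β` and total shape `γᶜ/α`
with ballot reading word, semistandard rows and columns (omitting `⊠`), in
which `⊠` lies between the `(i-1)`-st and `i`-th horizontal strips. -/
def XSet (k m : ℕ) (a b g : Partition k m) (i : ℕ) : Set PState :=
  {x | x.box ∈ totalShape k m a g ∧
    (∀ p : Cell, (x.T p).isSome ↔ (p ∈ totalShape k m a g ∧ p ≠ x.box)) ∧
    RowsWeak x.T ∧ ColsStrict x.T ∧ PosEntries x.T ∧
    Ballot k m x.T ∧ HasContent k m b x.T ∧ BoxBetween i x}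

/-- One Phase 2 move at value `i` (as a standalone step relation). -/
def P2Step (k m i : ℕ) (x y : PState) : Prop :=
  phase2Cond k m i x ∧ ∃ q, Phase2Move i x q ∧ y = swapState x q i

/-- The operator `ℓᵢ : Xᵢ → Xᵢ₊₁`: the composition of the steps of
`local-esh` exchanging `⊠` with entries equal to `i` (a single Phase 1 move
if some `i` precedes the box, otherwise the Phase 2 loop at value `i`). -/
def LiRel (k m i : ℕ) (x y : PState) : Prop :=
  (∃ q, Phase1Move i x q ∧ y = swapState x q i) ∨
  (¬ phase1Cond i x ∧ Relation.ReflTransGen (P2Step k m i) x y ∧ ¬ phase2Cond k m i y)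

/-- One step of the inward jeu de taquin shuffle in which the box passes an
entry equal to `i`. -/
def SiStep (i : ℕ) (x y : PState) : Prop := InStep x y ∧ x.T y.box = some i

/-- The operator `sᵢ : Xᵢ₊₁ → Xᵢ`: the inward jeu de taquin shuffle of `⊠`
past the entries equal to `i`. -/
def SiRun (i : ℕ) (x y : PState) : Prop :=
  Relation.ReflTransGen (SiStep i) x y ∧ ∀ z, ¬ SiStep i y z

/-- `DownTo j` is the composite `s₁ ∘ s₂ ∘ ⋯ ∘ s_j : X_{j+1} → X₁`. -/
inductive DownTo : ℕ → PState → PState → Prop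
  | zero (x : PState) : DownTo 0 x x
  | succ {j : ℕ} {x y z : PState} : SiRun (j + 1) x y → DownTo j y z → DownTo (j + 1) x z

/-!
The existence claim is immediate: a positive count of `i`'s strictly after `⊠` exhibits one.
Since the box and the filling stay inside the `k × m` rectangle, the `i`'s form a finite
set, so a nearest one on either side of `⊠` exists and every move is defined. Termination
follows from a lexicographic measure: each step either increases `i`, or passes from Phase 1
to Phase 2, or (a Phase 2 move) pushes `⊠` strictly later in reading order, which shrinks the
set of cells of the rectangle after it.
-/

open Relation

theorem _root_.Relation.exists_reflTransGen_of_decreasing {α β : Type*} [Preorder β]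
    [WellFoundedLT β] {r : α → α → Prop} {P Q : α → Prop} (f : α → β)
    (h : ∀ a, P a → ¬ Q a → ∃ b, r a b ∧ P b ∧ f b < f a) (a : α) (ha : P a) :
    ∃ b, Q b ∧ ReflTransGen r a b := by
  induction a using (InvImage.wf f wellFounded_lt).induction with
  | _ a ih =>
    by_cases hQ : Q a
    · exact ⟨a, hQ, .refl⟩
    obtain ⟨b, hab, hb, hlt⟩ := h a ha hQ
    obtain ⟨c, hc, hbc⟩ := ih b hlt hb
    exact ⟨c, hc, .head hab hbc⟩

def readKey (p : Cell) : ℕᵒᵈ ×ₗ ℕ := toLex (OrderDual.toDual p.1, p.2)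

theorem readBefore_iff_readKey_lt {p q : Cell} : readBefore p q ↔ readKey p < readKey q := by
  simp only [readBefore, readKey, Prod.Lex.toLex_lt_toLex, OrderDual.toDual_lt_toDual,
    OrderDual.toDual_inj]

theorem readKey_injective : Function.Injective readKey := fun p q h => by
  simpa [readKey, Prod.ext_iff] using h

theorem readBefore_irrefl (p : Cell) : ¬ readBefore p p := by
  simp [readBefore_iff_readKey_lt]

theorem readBefore_trans {p q r : Cell} (hpq : readBefore p q) (hqr : readBefore q r) :
    readBefore p r :=
  readBefore_iff_readKey_lt.2 ((readBefore_iff_readKey_lt.1 hpq).trans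
    (readBefore_iff_readKey_lt.1 hqr))

theorem exists_phase1Move {i : ℕ} {x : PState} (hfin : {q | x.T q = some i}.Finite)
    (hc : phase1Cond i x) : ∃ q, Phase1Move i x q := by
  obtain ⟨q, ⟨hq, hqb⟩, hmax⟩ := Set.exists_max_image
    {q | x.T q = some i ∧ readBefore q x.box} readKey (hfin.subset fun _ h => h.1) hc
  refine ⟨q, hq, hqb, fun q' hq' hq'b => ?_⟩
  rcases (hmax q' ⟨hq', hq'b⟩).eq_or_lt with h | h
  · exact .inl (readKey_injective h)
  · exact .inr (readBefore_iff_readKey_lt.2 h)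

theorem exists_phase2Move {i : ℕ} {x : PState} (hfin : {q | x.T q = some i}.Finite)
    (hc : ∃ q, x.T q = some i ∧ readBefore x.box q) : ∃ q, Phase2Move i x q := by
  obtain ⟨q, ⟨hq, hqb⟩, hmin⟩ := Set.exists_min_image
    {q | x.T q = some i ∧ readBefore x.box q} readKey (hfin.subset fun _ h => h.1) hc
  refine ⟨q, hq, hqb, fun q' hq' hq'b => ?_⟩
  rcases (hmin q' ⟨hq', hq'b⟩).eq_or_lt with h | h
  · exact .inl (readKey_injective h).symm
  · exact .inr (readBefore_iff_readKey_lt.2 h)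

theorem exists_entry_after_box {k m i : ℕ} {x : PState} (hc : phase2Cond k m i x) :
    ∃ q, x.T q = some i ∧ readBefore x.box q := by
  classical
  have hpos := Nat.zero_lt_of_lt hc
  unfold countP at hpos
  obtain ⟨q, hq⟩ := Finset.card_pos.1 hpos
  exact ⟨q, (Finset.mem_filter.1 hq).2.2, (Finset.mem_filter.1 hq).2.1⟩

def rect (k m : ℕ) : Finset Cell := Finset.range k ×ˢ Finset.range m

theorem totalShape_subset_rect {k m : ℕ} (a g : Partition k m) :
    totalShape k m a g ⊆ rect k m := fun _ hp =>
  Finset.mem_product.2 ⟨Finset.mem_range.2 hp.1,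
    Finset.mem_range.2 (hp.2.2.trans_le (Nat.sub_le _ _))⟩

def InRect (k m : ℕ) (z : PState) : Prop :=
  z.box ∈ rect k m ∧ ∀ p v, z.T p = some v → p ∈ rect k m

namespace InRect

variable {k m lb : ℕ}

theorem of_memLR1 {a b g : Partition k m} {x : PState} (hx : MemLR1 k m a b g x) :
    InRect k m x :=
  ⟨totalShape_subset_rect a g hx.1, fun p v hp =>
    totalShape_subset_rect a g ((hx.2.1 p).1 (by simp [hp])).1⟩

theorem finite_entries {z : PState} (hz : InRect k m z) (v : ℕ) : {q | z.T q = some v}.Finite :=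
  (rect k m).finite_toSet.subset fun q hq => hz.2 q v hq

theorem swapState {z : PState} {q : Cell} {v : ℕ} (hz : InRect k m z) (hq : q ∈ rect k m) :
    InRect k m (swapState z q v) := by
  refine ⟨hq, fun p w hp => ?_⟩
  simp only [SC.swapState, Function.update_apply] at hp
  split_ifs at hp with hbox
  · exact hbox ▸ hz.1
  · exact hz.2 p w hp

theorem of_step {s t : ℕ × Bool × PState} (h : Step k m lb s t) (hs : InRect k m s.2.2) :
    InRect k m t.2.2 := by
  cases h with
  | p1 _ h => exact hs.swapState (hs.2 _ _ h.1)
  | p1to2 => exact hs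
  | p2 _ _ h => exact hs.swapState (hs.2 _ _ h.1)
  | p2inc => exact hs

theorem of_reflTransGen {s t : ℕ × Bool × PState} (h : ReflTransGen (Step k m lb) s t)
    (hs : InRect k m s.2.2) : InRect k m t.2.2 := by
  induction h with
  | refl => exact hs
  | tail _ hst ih => exact of_step hst ih

end InRect

open scoped Classical in
noncomputable def cellsAfter (k m : ℕ) (p : Cell) : Finset Cell :=
  (rect k m).filter (readBefore p ·)

theorem card_cellsAfter_lt {k m : ℕ} {p q : Cell} (hq : q ∈ rect k m) (hpq : readBefore p q) :
    (cellsAfter k m q).card < (cellsAfter k m p).card := by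
  classical
  have hsub : cellsAfter k m q ⊆ cellsAfter k m p := fun r hr => by
    obtain ⟨hr, hqr⟩ := Finset.mem_filter.1 hr
    exact Finset.mem_filter.2 ⟨hr, readBefore_trans hpq hqr⟩
  refine Finset.card_lt_card ((Finset.ssubset_iff_of_subset hsub).2 ⟨q, ?_, ?_⟩)
  · exact Finset.mem_filter.2 ⟨hq, hpq⟩
  · exact fun h => readBefore_irrefl q (Finset.mem_filter.1 h).2

noncomputable def eshMeasure (k m lb : ℕ) (s : ℕ × Bool × PState) : ℕ ×ₗ ℕ ×ₗ ℕ :=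
  toLex (lb + 1 - s.1, toLex (cond s.2.1 0 1, (cellsAfter k m s.2.2.box).card))

theorem Step.fst_le {k m lb : ℕ} {s t : ℕ × Bool × PState} (h : Step k m lb s t) :
    t.1 ≤ lb + 1 := by
  cases h <;> omega

theorem exists_step {k m lb i : ℕ} {ph : Bool} {z : PState} (hz : InRect k m z) (hi : i ≤ lb) :
    ∃ t, Step k m lb (i, ph, z) t ∧ eshMeasure k m lb t < eshMeasure k m lb (i, ph, z) := by
  have hdrop : lb + 1 - (i + 1) < lb + 1 - i := by omega
  cases ph with
  | false =>
    by_cases hc : phase1Cond i z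
    · obtain ⟨q, hq⟩ := exists_phase1Move (hz.finite_entries i) hc
      exact ⟨_, .p1 hi hq, Prod.Lex.toLex_lt_toLex.2 (.inl hdrop)⟩
    · refine ⟨_, .p1to2 hi hc, Prod.Lex.toLex_lt_toLex.2 (.inr ⟨rfl, ?_⟩)⟩
      exact Prod.Lex.toLex_lt_toLex.2 (.inl zero_lt_one)
  | true =>
    by_cases hc : phase2Cond k m i z
    · obtain ⟨q, hq⟩ := exists_phase2Move (hz.finite_entries i) (exists_entry_after_box hc)
      refine ⟨_, .p2 hi hc hq, Prod.Lex.toLex_lt_toLex.2 (.inr ⟨rfl, ?_⟩)⟩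
      exact Prod.Lex.toLex_lt_toLex.2 (.inr ⟨rfl, card_cellsAfter_lt (hz.2 _ _ hq.1) hq.2.1⟩)
    · exact ⟨_, .p2inc hi hc, Prod.Lex.toLex_lt_toLex.2 (.inl hdrop)⟩

theorem exists_run_to_end {k m lb : ℕ} (s : ℕ × Bool × PState) (hs : InRect k m s.2.2)
    (hi : s.1 ≤ lb + 1) : ∃ bl y, ReflTransGen (Step k m lb) s (lb + 1, bl, y) := by
  obtain ⟨⟨i, bl, y⟩, rfl, hrun⟩ := exists_reflTransGen_of_decreasing
    (P := fun s => InRect k m s.2.2 ∧ s.1 ≤ lb + 1) (Q := fun s => s.1 = lb + 1)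
    (eshMeasure k m lb) (fun ⟨i, ph, _⟩ ⟨hs, hi⟩ hne => by
      obtain ⟨t, hst, hlt⟩ := exists_step (ph := ph) hs (show i ≤ lb by omega)
      exact ⟨t, hst, ⟨hs.of_step hst, hst.fst_le⟩, hlt⟩) s ⟨hs, hi⟩
  exact ⟨bl, y, hrun⟩

theorem stmt_3_general (k m : ℕ) (a b g : Partition k m)
    (x : PState) (hx : MemLR1 k m a b g x) :
    (∀ (i : ℕ) (z : PState),
      Relation.ReflTransGen (Step k m b.length) (1, false, x) (i, true, z) →
      phase2Cond k m i z →
        (∃ q, z.T q = some i ∧ readBefore z.box q) ∧ ∃ q, Phase2Move i z q) ∧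
    ∃ (bl : Bool) (y : PState),
      Relation.ReflTransGen (Step k m b.length) (1, false, x)
        (b.length + 1, bl, y) := by
  have hrect : InRect k m x := InRect.of_memLR1 hx
  refine ⟨fun i z hrun hc => ?_, exists_run_to_end (1, false, x) hrect (by omega)⟩
  have hq := exists_entry_after_box hc
  exact ⟨hq, exists_phase2Move ((hrect.of_reflTransGen hrun).finite_entries i) hq⟩

/-- In Phase 2 with current value `i`, if the suffix strictly
after `⊠` has strictly more `i`'s than `(i+1)`'s, then some entry `i` occurs
after `⊠` in reading order (and hence a nearest such entry exists, so the move
is well defined); moreover the algorithm terminates. -/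
theorem stmt_3 (k m : ℕ) (hk : 0 < k) (hm : 0 < m) (a b g : Partition k m)
    (hsz : a.size + b.size + g.size = k * m - 1)
    (x : PState) (hx : MemLR1 k m a b g x) :
    (∀ (i : ℕ) (z : PState),
      Relation.ReflTransGen (Step k m b.length) (1, false, x) (i, true, z) →
      phase2Cond k m i z →
        (∃ q, z.T q = some i ∧ readBefore z.box q) ∧ ∃ q, Phase2Move i z q) ∧
    ∃ (bl : Bool) (y : PState),
      Relation.ReflTransGen (Step k m b.length) (1, false, x)
        (b.length + 1, bl, y) :=
  stmt_3_general k m a b g x hx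

end SC
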